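/- arXiv:1608.03142 — 4 statements merged into one kernel-verified Lean document; each statement's English description precedes it below -/
import Mathlib

section
/- For every partition λ of n there exists a unique partition λ⁺ of n in which every even part occurs with even multiplicity, such that λ⁺ ≤ λ in the dominance order, and for any partition η of n with every even part occurring with even multiplicity, η ≤ λ implies η ≤ λ⁺. -/
/-!
If `λ` has an even part of odd multiplicity, let `v` be the largest one and move one box from
the last row of length `v` down to the first row of length `< v - 1`. The new partition `λ'` is
strictly dominated by `λ`, and its partial sums are one less than those of `λ` exactly on the
rows from the last `v` through the run of `(v - 1)`s; there the partial sums of `λ` have the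
parity of the row count plus one. An `η ∈ 𝒫₁` dominated by `λ` cannot reach them: at the
first such row `i`, the first `i` parts of `η` are exactly its parts `≥ v`, and their even
parts come in pairs, so their sum has the parity of `i`. Hence every such `η` is dominated by
`λ'`, and iterating (the sum of all partial sums decreases) ends in `λ⁺`. Uniqueness is
antisymmetry of the dominance order.
-/

/-- A partition of `n`: weakly decreasing list of positive integers summing to `n`. -/
def IsPartition (l : List ℕ) (n : ℕ) : Prop :=
  l.Pairwise (· ≥ ·) ∧ (∀ x ∈ l, 0 < x) ∧ l.sum = n

/-- Dominance order: `Dominates l m` means `l ≥ m`, i.e. every partial sum of `l`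
dominates the corresponding one of `m` (padding with zeros). -/
def Dominates (l m : List ℕ) : Prop := ∀ k, (m.take k).sum ≤ (l.take k).sum

open List

namespace List

theorem sum_take_succ_getD (l : List ℕ) (j : ℕ) :
    (l.take (j + 1)).sum = (l.take j).sum + l.getD j 0 := by
  rcases lt_or_ge j l.length with h | h
  · rw [getD_eq_getElem _ _ h, sum_take_succ l j h]
  · rw [take_of_length_le h, take_of_length_le (by omega), getD_eq_default _ _ h, add_zero]

theorem sum_take_append (l₁ l₂ : List ℕ) (j : ℕ) :
    ((l₁ ++ l₂).take j).sum = (l₁.take j).sum + (l₂.take (j - l₁.length)).sum := by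
  rw [take_append, sum_append]

theorem sum_take_le_sum (l : List ℕ) (j : ℕ) : (l.take j).sum ≤ l.sum :=
  (take_sublist j l).sum_le_sum fun _ _ => Nat.zero_le _

theorem getD_le_of_forall_le {l : List ℕ} {c : ℕ} (h : ∀ x ∈ l, x ≤ c) (i : ℕ) :
    l.getD i 0 ≤ c := by
  rcases lt_or_ge i l.length with hi | hi
  · rw [getD_eq_getElem _ _ hi]; exact h _ (getElem_mem hi)
  · rw [getD_eq_default _ _ hi]; exact Nat.zero_le c

theorem sum_mod_two (l : List ℕ) : l.sum % 2 = (l.length + l.countP (Even ·)) % 2 := by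
  induction l with
  | nil => rfl
  | cons a t ih =>
    rw [sum_cons, length_cons, countP_cons]
    rcases Nat.even_or_odd a with ha | ha
    · simp only [ha, decide_true, if_true]; rw [Nat.even_iff] at ha; omega
    · simp only [Nat.not_even_iff_odd.2 ha, decide_false, Bool.false_eq_true, if_false]
      rw [Nat.odd_iff] at ha; omega

theorem even_countP_of_forall_even_count {l : List ℕ} {p : ℕ → Bool}
    (h : ∀ x, p x → Even (l.count x)) : Even (l.countP p) := by
  rw [← sum_map_count_dedup_filter_eq_countP, even_iff_two_dvd]
  refine dvd_sum fun y hy => ?_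
  obtain ⟨x, hx, rfl⟩ := mem_map.1 hy
  exact (h x (mem_filter.1 hx).2).two_dvd

theorem take_eq_filter_le {l : List ℕ} {v i : ℕ} (htake : ∀ x ∈ l.take i, v ≤ x)
    (hdrop : ∀ x ∈ l.drop i, x < v) : l.take i = l.filter (v ≤ ·) := by
  conv_rhs => rw [← take_append_drop i l]
  rw [filter_append, filter_eq_self.2 (by simpa using htake),
    filter_eq_nil_iff.2 (by simpa using hdrop), append_nil]

namespace Pairwise

theorem getD_le_getD {l : List ℕ} (hl : l.Pairwise (· ≥ ·)) {i j : ℕ} (hij : i ≤ j) :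
    l.getD j 0 ≤ l.getD i 0 := by
  rcases lt_or_ge j l.length with hj | hj
  · rw [getD_eq_getElem _ _ hj, getD_eq_getElem _ _ (by omega)]
    rcases hij.eq_or_lt with rfl | hlt
    · exact le_rfl
    · exact pairwise_iff_getElem.1 hl i j _ hj hlt
  · rw [getD_eq_default _ _ hj]; exact Nat.zero_le _

theorem getD_le_of_mem_take {l : List ℕ} (hl : l.Pairwise (· ≥ ·)) {i x : ℕ}
    (hx : x ∈ l.take i) : l.getD (i - 1) 0 ≤ x := by
  obtain ⟨t, ht, rfl⟩ := mem_take_iff_getElem.1 hx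
  rw [← getD_eq_getElem l 0]
  exact hl.getD_le_getD (by omega)

theorem le_getD_of_mem_drop {l : List ℕ} (hl : l.Pairwise (· ≥ ·)) {i x : ℕ}
    (hx : x ∈ l.drop i) : x ≤ l.getD i 0 := by
  obtain ⟨t, ht, rfl⟩ := mem_drop_iff_getElem.1 hx
  rw [← getD_eq_getElem l 0]
  exact hl.getD_le_getD (by omega)

theorem exists_eq_append_ge_lt {l : List ℕ} (hl : l.Pairwise (· ≥ ·)) (t : ℕ) :
    ∃ P Q, l = P ++ Q ∧ (∀ x ∈ P, t ≤ x) ∧ ∀ x ∈ Q, x < t := by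
  induction l with
  | nil => exact ⟨[], [], rfl, by simp, by simp⟩
  | cons a l ih =>
    obtain ⟨ha, hl⟩ := pairwise_cons.1 hl
    by_cases hta : t ≤ a
    · obtain ⟨P, Q, rfl, hP, hQ⟩ := ih hl
      exact ⟨a :: P, Q, rfl, by simpa [hta] using hP, hQ⟩
    · refine ⟨[], a :: l, rfl, by simp, fun x hx => ?_⟩
      rcases mem_cons.1 hx with rfl | hx
      · omega
      · have := ha x hx; omega

theorem exists_decomposition {l : List ℕ} (hl : l.Pairwise (· ≥ ·)) {u : ℕ}
    (hu : u + 1 ∈ l) :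
    ∃ A M T, l = A ++ (u + 1) :: (M ++ T) ∧
      (∀ x ∈ A, u + 1 ≤ x) ∧ (∀ x ∈ M, x = u) ∧ ∀ x ∈ T, x < u := by
  obtain ⟨P, Q, rfl, hP, hQ⟩ := hl.exists_eq_append_ge_lt (u + 1)
  have huP : u + 1 ∈ P := by
    rcases mem_append.1 hu with h | h
    · exact h
    · exact absurd (hQ _ h) (lt_irrefl _)
  obtain ⟨A, p, rfl⟩ : ∃ A p, P = A ++ [p] := by
    rcases eq_nil_or_concat P with rfl | ⟨A, p, rfl⟩
    · simp at huP
    · exact ⟨A, p, concat_eq_append ..⟩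
  have hPs := (pairwise_append.1 hl).1
  have hp : p = u + 1 := by
    refine le_antisymm ?_ (hP p (by simp))
    rcases mem_append.1 huP with h | h
    · exact (pairwise_append.1 hPs).2.2 _ h p (mem_singleton_self p)
    · exact (mem_singleton.1 h).ge
  obtain ⟨M, T, rfl, hM, hT⟩ := (pairwise_append.1 hl).2.1.exists_eq_append_ge_lt u
  refine ⟨A, M, T, by simp [hp], fun x hx => hP x (by simp [hx]), fun x hx => ?_, hT⟩
  have := hM x hx
  have := hQ x (by simp [hx])
  omega

end Pairwise

end List

namespace Dominates

theorem refl (l : List ℕ) : Dominates l l := fun _ => le_rfl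

theorem trans {l m p : List ℕ} (hlm : Dominates l m) (hmp : Dominates m p) : Dominates l p :=
  fun k => (hmp k).trans (hlm k)

theorem antisymm {l m : List ℕ} (hl : ∀ x ∈ l, 0 < x) (hm : ∀ x ∈ m, 0 < x)
    (hlm : Dominates l m) (hml : Dominates m l) : l = m := by
  have hgetD (i : ℕ) : l.getD i 0 = m.getD i 0 := by
    have h₁ := sum_take_succ_getD l i
    have h₂ := sum_take_succ_getD m i
    have := le_antisymm (hml i) (hlm i)
    have := le_antisymm (hml (i + 1)) (hlm (i + 1))
    omega
  refine ext_getElem? fun i => ?_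
  have := hgetD i
  rw [getD_eq_getElem?_getD, getD_eq_getElem?_getD] at this
  rcases ha : l[i]? with _ | a <;> rcases hb : m[i]? with _ | b <;>
    simp only [ha, hb, Option.getD_none, Option.getD_some] at this ⊢
  · exact absurd this (hm b (mem_of_getElem? hb)).ne
  · exact absurd this (hl a (mem_of_getElem? ha)).ne'
  · rw [this]

end Dominates

-- Membership in `𝒫₁`.
def EvenPartsEvenMultiplicity (l : List ℕ) : Prop := ∀ x : ℕ, Even x → Even (l.count x)

theorem EvenPartsEvenMultiplicity.sum_filter_le_mod_two {l : List ℕ}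
    (hl : EvenPartsEvenMultiplicity l) (v : ℕ) :
    (l.filter (v ≤ ·)).sum % 2 = (l.filter (v ≤ ·)).length % 2 := by
  have heven : Even ((l.filter (v ≤ ·)).countP (Even ·)) := by
    rw [countP_filter]
    exact even_countP_of_forall_even_count fun w hw => by
      simp only [Bool.and_eq_true, decide_eq_true_eq] at hw
      exact hl w hw.1
  rw [sum_mod_two, Nat.add_mod, Nat.even_iff.1 heven, add_zero, Nat.mod_mod]

theorem EvenPartsEvenMultiplicity.sum_take_mod_two {l : List ℕ} (hl : EvenPartsEvenMultiplicity l)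
    (hs : l.Pairwise (· ≥ ·)) {i v : ℕ} (hv : 0 < v) (hup : v ≤ l.getD (i - 1) 0)
    (hlow : l.getD i 0 < v) : (l.take i).sum % 2 = i % 2 := by
  have hlen : i ≤ l.length := by
    by_contra h
    rw [getD_eq_default _ _ (by omega)] at hup
    omega
  have htake : l.take i = l.filter (v ≤ ·) :=
    take_eq_filter_le (fun _ hx => hup.trans (hs.getD_le_of_mem_take hx))
      (fun _ hx => (hs.le_getD_of_mem_drop hx).trans_lt hlow)
  have := hl.sum_filter_le_mod_two v
  rwa [← htake, length_take_of_le hlen] at this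

theorem countP_even_and_le_eq {v : ℕ} (hv : Even v) (l : List ℕ) :
    l.countP (fun x => decide (Even x) && decide (v ≤ x)) =
      l.count v + l.countP (fun x => decide (Even x) && decide (v < x)) := by
  induction l with
  | nil => rfl
  | cons a t ih =>
    simp only [countP_cons, count_cons, ih, beq_iff_eq]
    rcases lt_trichotomy a v with h | rfl | h
    · simp [h.ne, h.not_ge, h.not_gt]
    · simp [hv]; omega
    · simp [h.ne', h.le, h]; omega

theorem odd_countP_even_and_le {l : List ℕ} {v : ℕ} (hv : Even v) (hodd : Odd (l.count v))
    (hgt : ∀ w, Even w → v < w → Even (l.count w)) :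
    Odd (l.countP fun x => decide (Even x) && decide (v ≤ x)) := by
  rw [countP_even_and_le_eq hv]
  exact hodd.add_even (even_countP_of_forall_even_count fun w hw => by
    simp only [Bool.and_eq_true, decide_eq_true_eq] at hw
    exact hgt w hw.1 hw.2)

theorem sum_filter_le_mod_two_ne {l : List ℕ} {v : ℕ} (hv : Even v) (hodd : Odd (l.count v))
    (hgt : ∀ w, Even w → v < w → Even (l.count w)) :
    (l.filter (v ≤ ·)).sum % 2 ≠ (l.filter (v ≤ ·)).length % 2 := by
  have := Nat.odd_iff.1 (countP_filter (l := l) ▸ odd_countP_even_and_le hv hodd hgt)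
  rw [sum_mod_two]
  omega

namespace Dominates

theorem exists_sum_take_eq_and_le_getD {l η : List ℕ} (hdom : Dominates l η) {k R u : ℕ}
    (hk : u + 1 ≤ l.getD k 0) (hmid : ∀ j, k < j → j < R → u ≤ l.getD j 0) {j : ℕ}
    (hkj : k < j) (hjR : j ≤ R) (heq : (η.take j).sum = (l.take j).sum) :
    ∃ i, k < i ∧ i ≤ j ∧ (η.take i).sum = (l.take i).sum ∧
      u + 1 ≤ η.getD (i - 1) 0 := by
  induction j with
  | zero => omega
  | succ j ih =>
    by_cases hup : u + 1 ≤ η.getD j 0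
    · exact ⟨j + 1, hkj, le_rfl, heq, hup⟩
    have hη := sum_take_succ_getD η j
    have hl := sum_take_succ_getD l j
    have hdj := hdom j
    rcases (Nat.lt_succ_iff.1 hkj).eq_or_lt with rfl | hkj'
    · omega
    · have := hmid j hkj' (by omega)
      obtain ⟨i, hki, hij, hi⟩ := ih hkj' (by omega) (by omega)
      exact ⟨i, hki, by omega, hi⟩

theorem sum_take_lt_of_mod_two_ne {l η : List ℕ} (hdom : Dominates l η)
    (hηs : η.Pairwise (· ≥ ·)) (hη : EvenPartsEvenMultiplicity η) {k R u : ℕ}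
    (hk : u + 1 ≤ l.getD k 0) (hmid : ∀ j, k < j → j < R → u ≤ l.getD j 0)
    (hbelow : ∀ j, k < j → l.getD j 0 ≤ u)
    (hpar : ∀ j, k < j → j ≤ R → (l.take j).sum % 2 ≠ j % 2) {j : ℕ} (hkj : k < j)
    (hjR : j ≤ R) : (η.take j).sum < (l.take j).sum := by
  -- At the first row `i` where the partial sums agree, those of `η` have the parity of `i`.
  refine (hdom j).lt_of_ne fun heq => ?_
  obtain ⟨i, hki, hij, heqi, hup⟩ := hdom.exists_sum_take_eq_and_le_getD hk hmid hkj hjR heq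
  have hlow : η.getD i 0 < u + 1 := by
    have := hdom (i + 1)
    rw [sum_take_succ_getD, sum_take_succ_getD] at this
    have := hbelow i hki
    omega
  exact hpar i hki (hij.trans hjR) (heqi ▸ hη.sum_take_mod_two hηs (Nat.succ_pos u) hup hlow)

end Dominates

-- `(T.headD 0 + 1) :: T.tail` is `T` with a box added to its first row (a new row `1` if `T = []`).
theorem sum_take_cons_headD_succ_tail (T : List ℕ) (j : ℕ) :
    (((T.headD 0 + 1) :: T.tail).take j).sum = (T.take j).sum + if 0 < j then 1 else 0 := by
  cases T <;> cases j <;> simp [add_right_comm]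

theorem List.Pairwise.cons_headD_succ_tail {T : List ℕ} (hT : T.Pairwise (· ≥ ·)) :
    ((T.headD 0 + 1) :: T.tail).Pairwise (· ≥ ·) := by
  cases T with
  | nil => simp
  | cons c C =>
    obtain ⟨hc, hC⟩ := pairwise_cons.1 hT
    exact pairwise_cons.2 ⟨fun x hx => (hc x hx).trans (Nat.le_succ c), hC⟩

theorem mem_cons_headD_succ_tail {T : List ℕ} {y : ℕ} (hy : y ∈ (T.headD 0 + 1) :: T.tail) :
    y = T.headD 0 + 1 ∨ y ∈ T :=
  (mem_cons.1 hy).imp_right mem_of_mem_tail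

theorem headD_lt {T : List ℕ} {u : ℕ} (hT : ∀ x ∈ T, x < u) (hu : 0 < u) :
    T.headD 0 < u := by
  cases T with
  | nil => exact hu
  | cons c C => exact hT c (mem_cons_self ..)

theorem sum_take_moveBox (A M T : List ℕ) (u j : ℕ) :
    ((A ++ u :: (M ++ (T.headD 0 + 1) :: T.tail)).take j).sum +
        (if A.length < j ∧ j ≤ A.length + 1 + M.length then 1 else 0) =
      ((A ++ (u + 1) :: (M ++ T)).take j).sum := by
  rw [sum_take_append, sum_take_append]
  rcases le_or_gt j A.length with hj | hj
  · simp [Nat.sub_eq_zero_of_le hj, hj.not_gt]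
  obtain ⟨t, ht⟩ : ∃ t, j - A.length = t + 1 := ⟨j - A.length - 1, by omega⟩
  rw [ht, take_succ_cons, take_succ_cons, sum_cons, sum_cons, sum_take_append, sum_take_append,
    sum_take_cons_headD_succ_tail]
  split_ifs <;> omega

theorem IsPartition.moveBox {A M T : List ℕ} {u n : ℕ}
    (hl : IsPartition (A ++ (u + 1) :: (M ++ T)) n) (hA : ∀ x ∈ A, u + 1 ≤ x)
    (hM : ∀ x ∈ M, x = u) (hT : ∀ x ∈ T, x < u) (hu : 0 < u) :
    IsPartition (A ++ u :: (M ++ (T.headD 0 + 1) :: T.tail)) n := by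
  obtain ⟨hs, hpos, hsum⟩ := hl
  have hTs : T.Pairwise (· ≥ ·) := hs.sublist <|
    (sublist_append_right M T).trans ((sublist_cons_self _ _).trans (sublist_append_right A _))
  have hY (y : ℕ) (hy : y ∈ (T.headD 0 + 1) :: T.tail) : 0 < y ∧ y ≤ u := by
    rcases mem_cons_headD_succ_tail hy with rfl | hy
    · exact ⟨Nat.succ_pos _, headD_lt hT hu⟩
    · exact ⟨hpos y (by simp [hy]), (hT y hy).le⟩
  have hMs : M.Pairwise (· ≥ ·) := pairwise_of_forall_mem_list fun a ha b hb => by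
    rw [hM a ha, hM b hb]
  refine ⟨?_, ?_, ?_⟩
  · refine pairwise_append.2
      ⟨hs.sublist (sublist_append_left _ _), pairwise_cons.2 ⟨?_, ?_⟩, ?_⟩
    · intro x hx
      rcases mem_append.1 hx with hx | hx
      · exact (hM x hx).le
      · exact (hY x hx).2
    · exact pairwise_append.2 ⟨hMs, hTs.cons_headD_succ_tail,
        fun a ha b hb => (hM a ha) ▸ (hY b hb).2⟩
    · intro a ha b hb
      have := hA a ha
      rcases mem_cons.1 hb with rfl | hb
      · omega
      rcases mem_append.1 hb with hb | hb
      · rw [hM b hb]; omega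
      · have := (hY b hb).2; omega
  · intro x hx
    simp only [mem_append, mem_cons] at hx
    rcases hx with hx | rfl | hx | hx
    · exact lt_of_lt_of_le (Nat.succ_pos u) (hA x hx)
    · exact hu
    · rw [hM x hx]; exact hu
    · exact (hY x (mem_cons.2 hx)).1
  · rw [← hsum]
    cases T <;> simp <;> omega

theorem sum_take_succ_cons_run_mod_two {A M T : List ℕ} {u t : ℕ} (hM : ∀ x ∈ M, x = u)
    (hu : Odd u) (ht : t ≤ M.length) :
    ((A ++ (u + 1) :: (M ++ T)).take (A.length + 1 + t)).sum % 2 =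
      ((A ++ [u + 1]).sum + t) % 2 := by
  have htake : (A ++ (u + 1) :: (M ++ T)).take (A.length + 1 + t) = (A ++ [u + 1]) ++ M.take t := by
    simp [take_append, show A.length + 1 + t - A.length = t + 1 by omega,
      show A.length ≤ A.length + 1 + t by omega, Nat.sub_eq_zero_of_le ht]
  have hMt : (M.take t).sum = t * u := by
    rw [eq_replicate_iff.2 ⟨length_take_of_le ht, fun x hx => hM x (mem_of_mem_take hx)⟩,
      sum_replicate, smul_eq_mul]
  rw [htake, sum_append, hMt, Nat.add_mod, Nat.mul_mod, Nat.odd_iff.1 hu, mul_one, Nat.mod_mod,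
    ← Nat.add_mod]

theorem Dominates.moveBox {A M T η : List ℕ} {u : ℕ}
    (hdom : Dominates (A ++ (u + 1) :: (M ++ T)) η) (hηs : η.Pairwise (· ≥ ·))
    (hη : EvenPartsEvenMultiplicity η) (hM : ∀ x ∈ M, x = u) (hT : ∀ x ∈ T, x < u)
    (hu : Odd u) (hpar : (A ++ [u + 1]).sum % 2 ≠ (A.length + 1) % 2) :
    Dominates (A ++ u :: (M ++ (T.headD 0 + 1) :: T.tail)) η := by
  set l := A ++ (u + 1) :: (M ++ T) with hldef
  have hgetD (t : ℕ) : l.getD (A.length + 1 + t) 0 = (M ++ T).getD t 0 := by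
    rw [getD_append_right _ _ _ _ (by omega)]
    simp [show A.length + 1 + t - A.length = t + 1 by omega]
  have hk : u + 1 ≤ l.getD A.length 0 := by simp [l]
  have hmid (j : ℕ) (h₁ : A.length < j) (h₂ : j < A.length + 1 + M.length) :
      u ≤ l.getD j 0 := by
    obtain ⟨t, rfl⟩ : ∃ t, j = A.length + 1 + t := ⟨j - A.length - 1, by omega⟩
    rw [hgetD, getD_append _ _ _ _ (by omega), getD_eq_getElem _ _ (by omega),
      hM _ (getElem_mem _)]
  have hbelow (j : ℕ) (h : A.length < j) : l.getD j 0 ≤ u := by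
    obtain ⟨t, rfl⟩ : ∃ t, j = A.length + 1 + t := ⟨j - A.length - 1, by omega⟩
    rw [hgetD]
    refine getD_le_of_forall_le (fun x hx => ?_) t
    rcases mem_append.1 hx with hx | hx
    · exact (hM x hx).le
    · exact (hT x hx).le
  have hparl (j : ℕ) (h₁ : A.length < j) (h₂ : j ≤ A.length + 1 + M.length) :
      (l.take j).sum % 2 ≠ j % 2 := by
    obtain ⟨t, rfl⟩ : ∃ t, j = A.length + 1 + t := ⟨j - A.length - 1, by omega⟩
    have := sum_take_succ_cons_run_mod_two (A := A) (T := T) hM hu (t := t) (by omega)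
    rw [← hldef] at this
    omega
  intro j
  have hmove := sum_take_moveBox A M T u j
  rw [← hldef] at hmove
  split_ifs at hmove with hw
  · have := hdom.sum_take_lt_of_mod_two_ne hηs hη hk hmid hbelow hparl hw.1 hw.2
    omega
  · have := hdom j
    omega

theorem exists_max_even_odd_count {l : List ℕ} (h : ¬ EvenPartsEvenMultiplicity l) :
    ∃ v, Even v ∧ Odd (l.count v) ∧ ∀ w, Even w → v < w → Even (l.count w) := by
  obtain ⟨x, hx, hxc⟩ : ∃ x, Even x ∧ Odd (l.count x) := by
    simpa [EvenPartsEvenMultiplicity] using h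
  set S := l.toFinset.filter fun x => Even x ∧ Odd (l.count x)
  have hmem {w : ℕ} (hw : Even w) (hwc : Odd (l.count w)) : w ∈ S :=
    Finset.mem_filter.2 ⟨mem_toFinset.2 (count_pos_iff.1 hwc.pos), hw, hwc⟩
  obtain ⟨v, hvS, hmax⟩ := S.exists_max_image id ⟨x, hmem hx hxc⟩
  obtain ⟨hv, hvc⟩ := (Finset.mem_filter.1 hvS).2
  refine ⟨v, hv, hvc, fun w hw hvw => ?_⟩
  by_contra hwc
  exact absurd (hmax w (hmem hw (Nat.not_even_iff_odd.1 hwc))) (not_le.2 hvw)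

theorem IsPartition.exists_step {l : List ℕ} {n : ℕ} (hl : IsPartition l n)
    (hbad : ¬ EvenPartsEvenMultiplicity l) :
    ∃ l', IsPartition l' n ∧ Dominates l l' ∧ ¬ Dominates l' l ∧
      ∀ η, η.Pairwise (· ≥ ·) → EvenPartsEvenMultiplicity η →
        Dominates l η → Dominates l' η := by
  obtain ⟨v, hv, hodd, hgt⟩ := exists_max_even_odd_count hbad
  have hvl : v ∈ l := count_pos_iff.1 hodd.pos
  obtain ⟨u, rfl⟩ : ∃ u, v = u + 1 := Nat.exists_eq_succ_of_ne_zero (hl.2.1 v hvl).ne'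
  have hu : Odd u := by simpa [Nat.even_add_one] using hv
  obtain ⟨A, M, T, rfl, hA, hM, hT⟩ := hl.1.exists_decomposition hvl
  have hfilter : (A ++ (u + 1) :: (M ++ T)).filter (u + 1 ≤ ·) = A ++ [u + 1] := by
    rw [filter_append, filter_eq_self.2 (by simpa using hA), filter_cons_of_pos (by simp),
      filter_eq_nil_iff.2 fun x hx => ?_]
    rcases mem_append.1 hx with hx | hx
    · simp [hM x hx]
    · simp [(hT x hx).le]
  have hpar := sum_filter_le_mod_two_ne hv hodd hgt
  rw [hfilter, length_append, length_singleton] at hpar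
  refine ⟨_, hl.moveBox hA hM hT hu.pos, fun j => ?_, fun h => ?_,
    fun η hηs hη hdom => hdom.moveBox hηs hη hM hT hu hpar⟩
  · have := sum_take_moveBox A M T u j
    omega
  · have := sum_take_moveBox A M T u (A.length + 1)
    have := h (A.length + 1)
    simp only [Nat.lt_add_one, le_add_iff_nonneg_right, zero_le, and_self, if_true] at *
    omega

def dominancePotential (n : ℕ) (l : List ℕ) : ℕ :=
  ∑ j ∈ Finset.range (n + 1), (l.take j).sum

theorem dominancePotential_lt {l l' : List ℕ} {n : ℕ} (hl : l.sum = n) (hl' : IsPartition l' n)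
    (hle : Dominates l l') (hlt : ¬ Dominates l' l) :
    dominancePotential n l' < dominancePotential n l := by
  obtain ⟨j, hj⟩ : ∃ j, (l'.take j).sum < (l.take j).sum := by
    simpa [Dominates] using hlt
  have hjn : j ≤ n := by
    by_contra h
    have hlen := length_le_sum_of_one_le l' hl'.2.1
    have hsum := hl'.2.2
    rw [take_of_length_le (by omega), hsum] at hj
    exact absurd (sum_take_le_sum l j) (by omega)
  exact Finset.sum_lt_sum (fun i _ => hle i) ⟨j, Finset.mem_range.2 (by omega), hj⟩

theorem IsPartition.exists_greatest_dominated {l : List ℕ} {n : ℕ} (hl : IsPartition l n) :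
    ∃ lp, IsPartition lp n ∧ EvenPartsEvenMultiplicity lp ∧ Dominates l lp ∧
      ∀ η, η.Pairwise (· ≥ ·) → EvenPartsEvenMultiplicity η →
        Dominates l η → Dominates lp η := by
  by_cases h : EvenPartsEvenMultiplicity l
  · exact ⟨l, hl, h, Dominates.refl l, fun _ _ _ hη => hη⟩
  obtain ⟨l', hl', hll', hl'l, hmax⟩ := hl.exists_step h
  obtain ⟨lp, hlp, hP, hl'lp, hlpmax⟩ := hl'.exists_greatest_dominated
  exact ⟨lp, hlp, hP, hll'.trans hl'lp,
    fun η hηs hη hlη => hlpmax η hηs hη (hmax η hηs hη hlη)⟩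
termination_by dominancePotential n l
decreasing_by exact dominancePotential_lt hl.2.2 hl' hll' hl'l

/-- For every partition `λ` of `n` there is a unique `λ⁺ ∈ 𝒫₁(n)` (every even part with
even multiplicity) with `λ⁺ ≤ λ`, maximal among elements of `𝒫₁(n)` below `λ`. -/
theorem stmt_0 (n : ℕ) (lam : List ℕ) (hlam : IsPartition lam n) :
    ∃! lp : List ℕ, IsPartition lp n ∧ (∀ x : ℕ, Even x → Even (lp.count x)) ∧
      Dominates lam lp ∧
      ∀ eta : List ℕ, IsPartition eta n → (∀ x : ℕ, Even x → Even (eta.count x)) →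
        Dominates lam eta → Dominates lp eta := by
  obtain ⟨lp, hlp, hP, hdom, hmax⟩ := hlam.exists_greatest_dominated
  refine ⟨lp, ⟨hlp, hP, hdom, fun η hη hηP hlη => hmax η hη.1 hηP hlη⟩, ?_⟩
  rintro μ ⟨hμ, hμP, hlμ, hμmax⟩
  exact Dominates.antisymm hμ.2.1 hlp.2.1 (hμmax lp hlp hP hdom) (hmax μ hμ.1 hμP hlμ)
end

section
/- For n = 2r+1 with r ≥ 3, the partition (3,2,2,1^{2r-6}) strictly dominates (3,1^{2r-2}) and there is no partition ν of 2r+1 with every even part of even multiplicity satisfying (3,1^{2r-2}) < ν < (3,2,2,1^{2r-6}). -/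
/-- Strict dominance. -/
def StrictDom (l m : List ℕ) : Prop := Dominates l m ∧ l ≠ m

/-!
After removing the common first part `3`, the dominance claim is that every partition of `m`
dominates `(1^m)`. A partition `ν` strictly between the two must start with `3` and have second
part at most `2`, so `ν = (3, 2^a, 1^b)`; the fourth partial sum of `(3,2,2,1^{2r-6})` forces
`a ≤ 2`, where `a = 0` and `a = 2` give the two ends and `a = 1` leaves the even part `2` with
odd multiplicity.
-/

open List

theorem List.sum_take_replicate (n k a : ℕ) : ((replicate n a).take k).sum = min k n * a := by
  simp [take_replicate]

theorem dominates_replicate_one {l : List ℕ} (hpos : ∀ x ∈ l, 0 < x) :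
    Dominates l (replicate l.sum 1) := by
  induction l with
  | nil => simp [Dominates]
  | cons x l ih =>
    rintro (_ | k)
    · simp
    · have hx := hpos x mem_cons_self
      have hk := ih (fun y hy => hpos y (mem_cons_of_mem x hy)) k
      simp only [sum_cons, take_succ_cons, sum_take_replicate, mul_one] at hk ⊢
      omega

theorem exists_eq_cons_of_dominates {x : ℕ} {l l' m : List ℕ} (hx : 0 < x)
    (h₁ : Dominates (x :: l) m) (h₂ : Dominates m (x :: l')) : ∃ t, m = x :: t := by
  cases m with
  | nil => simpa using (h₂ 1).trans_lt hx
  | cons y t =>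
    have h₁ := h₁ 1
    have h₂ := h₂ 1
    simp only [take_succ_cons, take_zero, sum_cons, sum_nil, add_zero] at h₁ h₂
    exact ⟨t, by rw [le_antisymm h₁ h₂]⟩

theorem forall_le_of_dominates_cons_cons {x y : ℕ} {l t : List ℕ} (hs : t.Pairwise (· ≥ ·))
    (h : Dominates (x :: y :: l) (x :: t)) : ∀ z ∈ t, z ≤ y := by
  cases t with
  | nil => simp
  | cons z t =>
    have h2 := h 2
    simp only [take_succ_cons, take_zero, sum_cons, sum_nil] at h2
    rw [pairwise_cons] at hs
    rintro w (_ | ⟨_, hw⟩)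
    · omega
    · exact (hs.1 w hw).trans (by omega)

theorem eq_replicate_two_append_replicate_one {t : List ℕ} (hs : t.Pairwise (· ≥ ·))
    (hpos : ∀ x ∈ t, 0 < x) (hle : ∀ x ∈ t, x ≤ 2) :
    ∃ a b, t = replicate a 2 ++ replicate b 1 := by
  induction t with
  | nil => exact ⟨0, 0, rfl⟩
  | cons x t ih =>
    rw [pairwise_cons] at hs
    have hx₀ := hpos x mem_cons_self
    have hx₂ := hle x mem_cons_self
    interval_cases x
    · refine ⟨0, t.length + 1, ?_⟩
      rw [replicate_zero, nil_append, replicate_succ, ← eq_replicate_iff.mpr ⟨rfl, ?_⟩]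
      intro y hy
      have := hs.1 y hy
      have := hpos y (mem_cons_of_mem _ hy)
      omega
    · obtain ⟨a, b, rfl⟩ := ih hs.2 (fun y hy => hpos y (mem_cons_of_mem _ hy))
        (fun y hy => hle y (mem_cons_of_mem _ hy))
      exact ⟨a + 1, b, rfl⟩

/-- For `n = 2r+1`, `r ≥ 3`: `(3,2,2,1^{2r-6})` strictly dominates `(3,1^{2r-2})` and
no `ν ∈ 𝒫₁(2r+1)` lies strictly between them. -/
theorem stmt_4 (r : ℕ) (hr : 3 ≤ r) :
    let lam : List ℕ := 3 :: 2 :: 2 :: List.replicate (2*r - 6) 1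
    let eta : List ℕ := 3 :: List.replicate (2*r - 2) 1
    StrictDom lam eta ∧
    ¬ ∃ nu : List ℕ, IsPartition nu (2*r+1) ∧ (∀ x : ℕ, Even x → Even (nu.count x)) ∧
        StrictDom lam nu ∧ StrictDom nu eta := by
  intro lam eta
  have heta : eta = 3 :: 1 :: replicate (2 * r - 3) 1 := by
    simp only [eta, show 2 * r - 2 = 2 * r - 3 + 1 by omega, replicate_succ]
  refine ⟨⟨?_, by simp [lam, heta]⟩, ?_⟩
  · have hdom := dominates_replicate_one (l := 2 :: 2 :: replicate (2 * r - 6) 1) (by simp)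
    rw [show (2 :: 2 :: replicate (2 * r - 6) 1).sum = 2 * r - 2 by simp; omega] at hdom
    rintro (_ | k)
    · simp
    · simpa [lam, eta] using hdom k
  rintro ⟨nu, ⟨hsort, hpos, hsum⟩, heven, ⟨hlam, hne_lam⟩, ⟨hnu, hne_eta⟩⟩
  obtain ⟨t, rfl⟩ := exists_eq_cons_of_dominates three_pos hlam hnu
  rw [pairwise_cons] at hsort
  obtain ⟨a, b, rfl⟩ := eq_replicate_two_append_replicate_one hsort.2
    (fun y hy => hpos y (mem_cons_of_mem _ hy)) (forall_le_of_dominates_cons_cons hsort.2 hlam)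
  have hab : 2 * a + b = 2 * r - 2 := by simp at hsum; omega
  have ha : a ≤ 2 := by
    by_contra! h
    obtain ⟨c, rfl⟩ : ∃ c, a = c + 3 := ⟨a - 3, by omega⟩
    have h4 := hlam 4
    simp [lam, replicate_succ] at h4
    omega
  interval_cases a
  · exact hne_eta (by rw [show b = 2 * r - 2 by omega]; rfl)
  · simpa [count_replicate] using heven 2 even_two
  · exact hne_lam (by rw [show b = 2 * r - 6 by omega]; rfl)
end

section
/- Let q be odd, s even with 4 ≤ s ≤ q−1, and let λ = (q,…,q,s) ∈ 𝒫₋₁(n) (with q repeated an even number of times m) and η = (q,…,q,s−2,2) (q repeated m times). Then η < λ in the dominance order, and the pair (λ,η) reduces, by erasing the m common rows (q,…,q), to the irreducible pair λ' = (s), η' = (s−2,2), and moreover η is a minimal degeneration of λ in 𝒫₋₁(n): there is no ν ∈ 𝒫₋₁(n) with η < ν < λ. -/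
def OddPartsEvenMult (l : List ℕ) : Prop := ∀ x : ℕ, Odd x → Even (l.count x)

lemma OddPartsEvenMult.of_append {c r : List ℕ} (h : OddPartsEvenMult (c ++ r))
    (hc : OddPartsEvenMult c) : OddPartsEvenMult r := fun x hx => by
  have := h x hx
  rw [List.count_append, Nat.even_add] at this
  exact this.1 (hc x hx)

lemma oddPartsEvenMult_replicate {m : ℕ} (hm : Even m) (q : ℕ) :
    OddPartsEvenMult (List.replicate m q) := fun x _ => by
  rw [List.count_replicate]
  split_ifs
  exacts [hm, .zero]

lemma dominates_append_left_iff (c l l' : List ℕ) :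
    Dominates (c ++ l) (c ++ l') ↔ Dominates l l' := by
  simp only [Dominates, List.take_append, List.sum_append]
  refine ⟨fun h k => ?_, fun h k => Nat.add_le_add_left (h _) _⟩
  simpa using h (c.length + k)

lemma strictDom_append_left_iff (c l l' : List ℕ) :
    StrictDom (c ++ l) (c ++ l') ↔ StrictDom l l' := by
  rw [StrictDom, StrictDom, dominates_append_left_iff, Ne, List.append_cancel_left_eq]

lemma take_length_eq_of_sum_take_eq {c ν : List ℕ} (hc : ∀ x ∈ c, 0 < x)
    (h : ∀ k ≤ c.length, (ν.take k).sum = (c.take k).sum) : ν.take c.length = c := by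
  induction c generalizing ν with
  | nil => simp
  | cons a c ih =>
    have h₁ := h 1 (by simp)
    cases ν with
    | nil => exact absurd (by simpa using h₁.symm) (hc a (by simp)).ne'
    | cons b ν =>
      obtain rfl : b = a := by simpa using h₁
      rw [List.length_cons, List.take_succ_cons]
      congr 1
      refine ih (fun x hx => hc x (List.mem_cons_of_mem _ hx)) fun k hk => ?_
      simpa using h (k + 1) (by simpa using hk)

lemma eq_append_drop_of_dominates_between {c l l' ν : List ℕ} (hc : ∀ x ∈ c, 0 < x)
    (h₁ : Dominates (c ++ l) ν) (h₂ : Dominates ν (c ++ l')) :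
    ν = c ++ ν.drop c.length := by
  have hprefix : ∀ k ≤ c.length, (ν.take k).sum = (c.take k).sum := fun k hk => by
    have h₁ := h₁ k
    have h₂ := h₂ k
    rw [List.take_append_of_le_length hk] at h₁ h₂
    exact le_antisymm h₁ h₂
  conv_lhs => rw [← List.take_append_drop c.length ν, take_length_eq_of_sum_take_eq hc hprefix]

lemma dominates_singleton_pair {s : ℕ} (hs : 2 ≤ s) : Dominates [s] [s - 2, 2] := by
  rintro (_ | _ | k)
  · exact le_rfl
  · simp
  · simp only [List.take_succ_cons, List.take_nil, List.sum_cons, List.sum_nil, add_zero]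
    omega

lemma not_between_singleton_pair {s : ℕ} (hs : Even s) (h4 : 4 ≤ s) {r : List ℕ}
    (hpos : ∀ x ∈ r, 0 < x) (hpar : OddPartsEvenMult r)
    (h₁ : StrictDom [s] r) (h₂ : StrictDom r [s - 2, 2]) : False := by
  obtain ⟨hd₁, hne₁⟩ := h₁
  obtain ⟨hd₂, hne₂⟩ := h₂
  have hsum : r.sum ≤ s := by
    have := hd₁ r.length
    rw [List.take_length] at this
    exact this.trans (by cases r.length <;> simp)
  rcases r with _ | ⟨a, t⟩
  · have : s - 2 ≤ 0 := by simpa using hd₂ 1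
    omega
  have ha₁ : a ≤ s := by simpa using hd₁ 1
  have ha₂ : s - 2 ≤ a := by simpa using hd₂ 1
  have hat : s - 2 + 2 ≤ a + (t.take 1).sum := by simpa using hd₂ 2
  have htsum : a + t.sum ≤ s := by simpa using hsum
  have hlen : t.length ≤ t.sum :=
    t.length_le_sum_of_one_le fun x hx => hpos x (List.mem_cons_of_mem _ hx)
  obtain rfl | rfl | rfl : a = s - 2 ∨ a = s - 1 ∨ a = s := by omega
  · rcases t with _ | ⟨b, t⟩
    · simp at hat
    have hlen' : t.length ≤ t.sum :=
      t.length_le_sum_of_one_le fun x hx => hpos x (by simp [hx])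
    simp only [List.take_succ_cons, List.take_zero, List.sum_cons, List.sum_nil, add_zero,
      add_le_add_iff_left] at hat htsum
    obtain rfl : b = 2 := by omega
    obtain rfl : t = [] := List.eq_nil_of_length_eq_zero (by omega)
    exact hne₂ rfl
  · have hcount := hpar (s - 1) (Nat.Even.sub_odd (by omega) hs odd_one)
    rw [List.count_cons_self, Nat.even_add_one, Nat.not_even_iff_odd] at hcount
    have hmem : s - 1 ∈ t := List.count_pos_iff.mp hcount.pos
    have := List.le_sum_of_mem hmem
    omega
  · obtain rfl : t = [] := List.eq_nil_of_length_eq_zero (by omega)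
    exact hne₁ rfl

theorem stmt_9_general (q s m n : ℕ) (hq : Odd q) (hs : Even s) (hm : Even m) (h4 : 4 ≤ s) :
    let lam : List ℕ := List.replicate m q ++ [s]
    let eta : List ℕ := List.replicate m q ++ [s - 2, 2]
    StrictDom lam eta ∧ lam.drop m = [s] ∧ eta.drop m = [s - 2, 2] ∧
    ¬ ∃ nu : List ℕ, IsPartition nu n ∧ (∀ x : ℕ, Odd x → Even (nu.count x)) ∧
        StrictDom lam nu ∧ StrictDom nu eta := by
  intro lam eta
  refine ⟨(strictDom_append_left_iff _ _ _).2 ⟨dominates_singleton_pair (by omega), by simp⟩,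
    List.drop_left' List.length_replicate, List.drop_left' List.length_replicate, ?_⟩
  rintro ⟨ν, ⟨-, hpos, -⟩, hpar, h₁, h₂⟩
  have hq₀ : ∀ x ∈ List.replicate m q, 0 < x := fun x hx =>
    List.eq_of_mem_replicate hx ▸ hq.pos
  have hν : ν = List.replicate m q ++ ν.drop m := by
    simpa using eq_append_drop_of_dominates_between hq₀ h₁.1 h₂.1
  rw [hν] at hpos hpar h₁ h₂
  exact not_between_singleton_pair hs h4 (fun x hx => hpos x (List.mem_append_right _ hx))
    (OddPartsEvenMult.of_append hpar (oddPartsEvenMult_replicate hm q))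
    ((strictDom_append_left_iff _ _ _).1 h₁) ((strictDom_append_left_iff _ _ _).1 h₂)

/-- For `q` odd, `s` even with `4 ≤ s ≤ q−1`, `λ = (q,…,q,s)` (with `q` repeated an even
number `m` of times) and `η = (q,…,q,s−2,2)`: `η < λ`, erasing the `m` common rows
reduces the pair to the irreducible pair `((s),(s−2,2))`, and `η` is a minimal
degeneration of `λ` in `𝒫₋₁(n)`. -/
theorem stmt_9 (q s m n : ℕ) (hq : Odd q) (hs : Even s) (hm : Even m)
    (h4 : 4 ≤ s) (hsq : s ≤ q - 1) (hn : n = m * q + s) :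
    let lam : List ℕ := List.replicate m q ++ [s]
    let eta : List ℕ := List.replicate m q ++ [s - 2, 2]
    StrictDom lam eta ∧ lam.drop m = [s] ∧ eta.drop m = [s - 2, 2] ∧
    ¬ ∃ nu : List ℕ, IsPartition nu n ∧ (∀ x : ℕ, Odd x → Even (nu.count x)) ∧
        StrictDom lam nu ∧ StrictDom nu eta :=
  stmt_9_general q s m n hq hs hm h4
end

section
/- For any partition λ ∈ 𝒫_ε(n) and any ε-degeneration η ≤ λ, if λ and η share their first r rows and first s columns (with (λ₁,…,λ_r) ∈ 𝒫_ε(λ₁+⋯+λ_r)), then the partitions λ', η' obtained by erasing these common rows and columns satisfy: λ', η' are partitions of the same number n', η' ≤ λ' in dominance order, and λ', η' ∈ 𝒫_{ε'}(n') where ε' = (−1)^s ε. -/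
/-- Membership in `𝒫_ε`: for `ε = 1` every even part has even multiplicity; for
`ε = −1` every odd part has even multiplicity. -/
def Peps (ε : ℤ) (l : List ℕ) : Prop :=
  ∀ x : ℕ, (if ε = 1 then Even x else Odd x) → Even (l.count x)

/-- `j`-th part of the transpose partition: the number of parts `≥ j`. -/
def transPart (l : List ℕ) (j : ℕ) : ℕ := l.countP (fun x => decide (j ≤ x))

private lemma sum_filter_pos (l : List ℕ) :
    (l.filter (fun x => decide (0 < x))).sum = l.sum := by
  induction l with
  | nil => simp
  | cons a t ih =>
    by_cases ha : 0 < a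
    · simp [List.filter_cons, ha, ih]
    · have : a = 0 := by omega
      simp [List.filter_cons, ha, ih, this]

private lemma sum_map_sub {s : ℕ} : ∀ l : List ℕ, (∀ x ∈ l, s ≤ x) →
    (l.map (· - s)).sum + s * l.length = l.sum := by
  intro l
  induction l with
  | nil => simp
  | cons a t ih =>
    intro h
    have has : s ≤ a := h a (by simp)
    have := ih (fun x hx => h x (by simp [hx]))
    simp only [List.map_cons, List.sum_cons, List.length_cons]
    have hmul : s * (t.length + 1) = s * t.length + s := by ring
    omega

private lemma take_sum_map_sub {s : ℕ} (l : List ℕ) (h : ∀ x ∈ l, s ≤ x) (k : ℕ) :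
    ((l.map (· - s)).take k).sum + s * min k l.length = (l.take k).sum := by
  rw [← List.map_take]
  have := sum_map_sub (l.take k) (fun x hx => h x (List.mem_of_mem_take hx))
  simpa [List.length_take] using this

private lemma take_sum_filter_pos : ∀ l : List ℕ, l.Pairwise (· ≥ ·) → ∀ k,
    ((l.filter (fun x => decide (0 < x))).take k).sum = (l.take k).sum := by
  intro l
  induction l with
  | nil => simp
  | cons a t ih =>
    intro hs k
    have ht : t.Pairwise (· ≥ ·) := hs.of_cons
    have hle : ∀ b ∈ t, b ≤ a := fun b hb => List.rel_of_pairwise_cons hs hb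
    by_cases ha : 0 < a
    · rw [List.filter_cons_of_pos (by simpa using ha)]
      cases k with
      | zero => simp
      | succ k => simp [List.take_succ_cons, ih ht k]
    · have ha0 : a = 0 := by omega
      have hz : ∀ b ∈ a :: t, b = 0 := by
        intro b hb
        rcases List.mem_cons.mp hb with h | h
        · omega
        · have := hle b h; omega
      have : (a :: t).filter (fun x => decide (0 < x)) = [] := by
        rw [List.filter_eq_nil_iff]
        intro b hb
        simp [hz b hb]
      rw [this]
      simp only [List.take_nil, List.sum_nil]
      exact (List.sum_eq_zero (fun x hx => hz x (List.mem_of_mem_take hx))).symm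

private lemma count_map_sub {s : ℕ} (x : ℕ) : ∀ l : List ℕ, (∀ a ∈ l, s ≤ a) →
    (l.map (· - s)).count x = l.count (x + s) := by
  intro l
  induction l with
  | nil => simp
  | cons a t ih =>
    intro h
    have has : s ≤ a := h a (by simp)
    have heq : (a - s = x) ↔ (a = x + s) := by omega
    have := ih (fun b hb => h b (by simp [hb]))
    simp only [List.map_cons, List.count_cons, this]
    by_cases hcase : a = x + s
    · simp [hcase, heq.mpr hcase]
    · have : ¬ (a - s = x) := fun hh => hcase (heq.mp hh)
      simp [hcase, this]

private lemma sorted_map_sub {s : ℕ} {l : List ℕ} (h : l.Pairwise (· ≥ ·)) :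
    (l.map (· - s)).Pairwise (· ≥ ·) := by
  rw [List.pairwise_map]
  exact h.imp (fun hab => Nat.sub_le_sub_right hab s)

private lemma cond_shift (ε : ℤ) (hε : ε = 1 ∨ ε = -1) (s x : ℕ)
    (h : if (-1 : ℤ) ^ s * ε = 1 then Even x else Odd x) :
    if ε = 1 then Even (x + s) else Odd (x + s) := by
  rcases Nat.even_or_odd s with hs | hs
  · rw [hs.neg_one_pow, one_mul] at h
    rcases hε with h1 | h1 <;> subst h1 <;> simp_all [Nat.even_add, Nat.odd_add,
      Nat.even_iff, Nat.odd_iff] <;> omega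
  · rw [hs.neg_one_pow] at h
    rcases hε with h1 | h1 <;> subst h1 <;>
      simp only [show ((-1 : ℤ) * 1 = 1) ↔ False by norm_num,
        show ((-1 : ℤ) * -1 = 1) ↔ True by norm_num, if_false, if_true] at h <;>
      simp_all [Nat.even_add, Nat.odd_add, Nat.even_iff, Nat.odd_iff] <;> omega

private lemma peps_aux (ε : ℤ) (hε : ε = 1 ∨ ε = -1) (s r : ℕ) (l : List ℕ)
    (hP : Peps ε l) (hhead : Peps ε (l.take r)) (hge : ∀ x ∈ l.drop r, s ≤ x) :
    Peps ((-1) ^ s * ε) (((l.drop r).map (· - s)).filter (fun x => decide (0 < x))) := by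
  intro x hx
  by_cases hx0 : x = 0
  · subst hx0
    have hmem : (0 : ℕ) ∉ (((l.drop r).map (· - s)).filter (fun x => decide (0 < x))) := by
      intro hmem
      have := List.of_mem_filter hmem
      simp at this
    rw [List.count_eq_zero.mpr hmem]
    exact Even.zero
  · have hxpos : 0 < x := Nat.pos_of_ne_zero hx0
    rw [List.count_filter (by simpa using hxpos), count_map_sub x _ hge]
    have hcond := cond_shift ε hε s x hx
    have h1 : Even (l.count (x + s)) := hP _ hcond
    have h2 : Even ((l.take r).count (x + s)) := hhead _ hcond
    have h3 : l.count (x + s) = (l.take r).count (x + s) + (l.drop r).count (x + s) := by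
      conv_lhs => rw [← List.take_append_drop r l]
      rw [List.count_append]
    obtain ⟨a, ha⟩ := h1
    obtain ⟨b, hb⟩ := h2
    exact ⟨a - b, by omega⟩

/-- Kraft–Procesi, Proposition 3.2 (combinatorial content): if `η ≤ λ` in `𝒫_ε(n)`
share their first `r` rows and first `s` columns, with `(λ₁,…,λ_r) ∈ 𝒫_ε`, then the
partitions `λ'`, `η'` obtained by erasing these common rows and columns are partitions
of a common `n'` with `η' ≤ λ'`, lying in `𝒫_{ε'}(n')` where `ε' = (−1)^s ε`. -/
theorem stmt_18 (ε : ℤ) (hε : ε = 1 ∨ ε = -1) (n r s : ℕ) (lam eta : List ℕ)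
    (hlam : IsPartition lam n) (heta : IsPartition eta n)
    (hPl : Peps ε lam) (hPe : Peps ε eta) (hdom : Dominates lam eta)
    (hrows : lam.take r = eta.take r) (hhead : Peps ε (lam.take r))
    (hcols : ∀ j, 1 ≤ j → j ≤ s → transPart lam j = transPart eta j)
    (hge1 : ∀ x ∈ lam.drop r, s ≤ x) (hge2 : ∀ x ∈ eta.drop r, s ≤ x) :
    let lam' := ((lam.drop r).map (· - s)).filter (fun x => decide (0 < x))
    let eta' := ((eta.drop r).map (· - s)).filter (fun x => decide (0 < x))
    ∃ n', IsPartition lam' n' ∧ IsPartition eta' n' ∧ Dominates lam' eta' ∧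
      Peps ((-1) ^ s * ε) lam' ∧ Peps ((-1) ^ s * ε) eta' := by

  intro lam' eta'
  obtain ⟨hlS, hlpos, hlsum⟩ := hlam
  obtain ⟨heS, hepos, hesum⟩ := heta
  -- basic sortedness facts
  have hdSl : (lam.drop r).Pairwise (· ≥ ·) := hlS.drop
  have hdSe : (eta.drop r).Pairwise (· ≥ ·) := heS.drop
  have hASl : ((lam.drop r).map (· - s)).Pairwise (· ≥ ·) := sorted_map_sub hdSl
  have hASe : ((eta.drop r).map (· - s)).Pairwise (· ≥ ·) := sorted_map_sub hdSe
  -- lengths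
  have hlen : s = 0 ∨ lam.length = eta.length := by
    rcases Nat.eq_zero_or_pos s with h0 | hs
    · exact Or.inl h0
    · right
      have h1 := hcols 1 le_rfl hs
      unfold transPart at h1
      have e1 : lam.countP (fun x => decide (1 ≤ x)) = lam.length :=
        List.countP_eq_length.mpr (fun a ha => by simpa using Nat.one_le_iff_ne_zero.mpr (hlpos a ha).ne')
      have e2 : eta.countP (fun x => decide (1 ≤ x)) = eta.length :=
        List.countP_eq_length.mpr (fun a ha => by simpa using Nat.one_le_iff_ne_zero.mpr (hepos a ha).ne')
      rw [e1, e2] at h1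
      exact h1
  -- take r sums agree
  have htr : (lam.take r).sum = (eta.take r).sum := by rw [hrows]
  -- total sums of drops
  have hsl : (lam.take r).sum + (lam.drop r).sum = n := by
    rw [← List.sum_append, List.take_append_drop, hlsum]
  have hse : (eta.take r).sum + (eta.drop r).sum = n := by
    rw [← List.sum_append, List.take_append_drop, hesum]
  -- dominance of drops
  have hdomdrop : ∀ k, ((eta.drop r).take k).sum ≤ ((lam.drop r).take k).sum := by
    intro k
    have h1 : (lam.take (r + k)).sum = (lam.take r).sum + ((lam.drop r).take k).sum := by
      rw [List.take_add, List.sum_append]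
    have h2 : (eta.take (r + k)).sum = (eta.take r).sum + ((eta.drop r).take k).sum := by
      rw [List.take_add, List.sum_append]
    have := hdom (r + k)
    omega
  -- prefix sums of lam'/eta' vs maps
  have hfl : ∀ k, (lam'.take k).sum = (((lam.drop r).map (· - s)).take k).sum :=
    take_sum_filter_pos _ hASl
  have hfe : ∀ k, (eta'.take k).sum = (((eta.drop r).map (· - s)).take k).sum :=
    take_sum_filter_pos _ hASe
  have hml : ∀ k, ((((lam.drop r).map (· - s)).take k)).sum
      + s * min k (lam.drop r).length = ((lam.drop r).take k).sum :=
    take_sum_map_sub _ hge1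
  have hme : ∀ k, ((((eta.drop r).map (· - s)).take k)).sum
      + s * min k (eta.drop r).length = ((eta.drop r).take k).sum :=
    take_sum_map_sub _ hge2
  -- total sums
  have hsuml : lam'.sum + s * (lam.drop r).length = (lam.drop r).sum := by
    have := sum_map_sub (lam.drop r) hge1
    rw [show lam'.sum = ((lam.drop r).map (· - s)).sum from sum_filter_pos _]
    exact this
  have hsume : eta'.sum + s * (eta.drop r).length = (eta.drop r).sum := by
    have := sum_map_sub (eta.drop r) hge2
    rw [show eta'.sum = ((eta.drop r).map (· - s)).sum from sum_filter_pos _]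
    exact this
  have hsumeq : eta'.sum = lam'.sum := by
    rcases hlen with h0 | h0
    · subst h0
      simp only [Nat.zero_mul, Nat.add_zero] at hsuml hsume
      omega
    · have : (eta.drop r).length = (lam.drop r).length := by
        simp [List.length_drop, h0]
      rw [this] at hsume
      set t := s * (lam.drop r).length with ht
      omega
  refine ⟨lam'.sum, ⟨?_, ?_, rfl⟩, ⟨?_, ?_, hsumeq⟩, ?_, ?_, ?_⟩
  · exact hASl.filter _
  · intro x hx
    have := List.of_mem_filter hx
    simpa using this
  · exact hASe.filter _
  · intro x hx
    have := List.of_mem_filter hx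
    simpa using this
  · -- dominance
    intro k
    rw [hfl k, hfe k]
    rcases hlen with h0 | h0
    · subst h0
      have h1 := hml k
      have h2 := hme k
      have := hdomdrop k
      simp only [Nat.zero_mul, Nat.add_zero] at h1 h2
      omega
    · have hlen' : (eta.drop r).length = (lam.drop r).length := by
        simp [List.length_drop, h0]
      have h1 := hml k
      have h2 := hme k
      rw [hlen'] at h2
      have := hdomdrop k
      set t := s * min k (lam.drop r).length with ht
      omega
  · exact peps_aux ε hε s r lam hPl hhead hge1
  · exact peps_aux ε hε s r eta hPe (hrows ▸ hhead) hge2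
end
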